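/- For N ≥ 4, the necklace elements x_{112122} and x_{112212} are distinct elements of S(gl_N)^{⊗2}. -/

import Mathlib

open MvPolynomial

/-- The necklace element `x_μ` of a 2-colored necklace `μ` of order `n` in `S(gl_N)^{⊗2}`,
the latter modelled as the polynomial algebra on two copies of the basis `e_{ij}` of `gl_N`:
variable `(s, i, j)` is the generator `e_{ij}` in tensor slot `s`. -/
noncomputable def neck (F : Type) [Field F] (N n : ℕ) (hn : 0 < n) (μ : ℕ → Fin 2) :
    MvPolynomial (Fin 2 × Fin N × Fin N) F :=
  ∑ i : Fin n → Fin N, ∏ m : Fin n,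
    X (μ m.val, i m, i ⟨(m.val + 1) % n, Nat.mod_lt _ hn⟩)

/-- The orientation-reversal involution `τ_S`, induced by the algebra map of `S(gl_N)^{⊗2}`
sending `e_{ij} ↦ e_{ji}` in each slot. -/
noncomputable def tauS (F : Type) [Field F] (N : ℕ) :
    MvPolynomial (Fin 2 × Fin N × Fin N) F →ₐ[F] MvPolynomial (Fin 2 × Fin N × Fin N) F :=
  rename fun q => (q.1, q.2.2, q.2.1)

lemma prod_X_eq {F : Type} [Field F] {σ : Type*} (s : Finset (Fin 6)) (v : Fin 6 → σ) :
    (∏ m ∈ s, (X (v m) : MvPolynomial σ F)) =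
      monomial (∑ m ∈ s, Finsupp.single (v m) 1) 1 := by
  classical
  induction s using Finset.induction with
  | empty => simp [monomial_zero']
  | insert a s hx ih =>
      rw [Finset.prod_insert hx, Finset.sum_insert hx, ih, X, monomial_mul, mul_one]

lemma sum_single_apply_ne {α : Type*} [DecidableEq α] (f : Fin 6 → α) (m0 : Fin 6) :
    (∑ m : Fin 6, Finsupp.single (f m) 1) (f m0) ≠ 0 := by
  have h : (∑ m : Fin 6, Finsupp.single (f m) 1) (f m0)
      = ∑ m : Fin 6, Finsupp.single (f m) 1 (f m0) := by
    rw [Finsupp.finset_sum_apply]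
  rw [h]
  have h1 : Finsupp.single (f m0) 1 (f m0) = 1 := by simp
  have := Finset.single_le_sum (f := fun m => Finsupp.single (f m) (1:ℕ) (f m0))
    (fun m _ => Nat.zero_le _) (Finset.mem_univ m0)
  omega

lemma coeff_neck (F : Type) [Field F] (N : ℕ) (μ : ℕ → Fin 2)
    (d : (Fin 2 × Fin N × Fin N) →₀ ℕ) :
    coeff d (neck F N 6 (by omega) μ) =
      ∑ i : Fin 6 → Fin N, if (∑ m : Fin 6, Finsupp.single
          ((μ m.val, i m, i ⟨(m.val + 1) % 6, Nat.mod_lt _ (by omega)⟩)) 1) = d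
        then (1:F) else 0 := by
  unfold neck
  rw [coeff_sum]
  refine Finset.sum_congr rfl fun i _ => ?_
  rw [prod_X_eq, coeff_monomial]


/-- For `N ≥ 4`, the necklace elements `x_{112122}` and `x_{112212}` are distinct
elements of `S(gl_N)^{⊗2}`. -/
theorem necklaces_distinct (F : Type) [Field F] [CharZero F] (N : ℕ) (hN : 4 ≤ N) :
    neck F N 6 (by omega) (fun m => ![0, 0, 1, 0, 1, 1] ⟨m % 6, Nat.mod_lt _ (by omega)⟩) ≠
    neck F N 6 (by omega) (fun m => ![0, 0, 1, 1, 0, 1] ⟨m % 6, Nat.mod_lt _ (by omega)⟩) := by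
  intro h
  have h0 : (0:ℕ) < N := by omega
  have h1 : (1:ℕ) < N := by omega
  have h2 : (2:ℕ) < N := by omega
  have h3 : (3:ℕ) < N := by omega
  set a0 : Fin N := ⟨0, h0⟩
  set a1 : Fin N := ⟨1, h1⟩
  set a2 : Fin N := ⟨2, h2⟩
  set a3 : Fin N := ⟨3, h3⟩
  set w : Fin 6 → Fin 2 × Fin N × Fin N :=
    ![(0, a0, a0), (0, a0, a1), (1, a1, a1), (0, a1, a2), (1, a2, a3), (1, a3, a0)] with hw
  set d : (Fin 2 × Fin N × Fin N) →₀ ℕ := ∑ m : Fin 6, Finsupp.single (w m) 1 with hd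
  have key : ∀ v : Fin 2 × Fin N × Fin N, d v ≠ 0 →
      v = w 0 ∨ v = w 1 ∨ v = w 2 ∨ v = w 3 ∨ v = w 4 ∨ v = w 5 := by
    intro v hv
    by_contra hc
    push_neg at hc
    obtain ⟨c0, c1, c2, c3, c4, c5⟩ := hc
    apply hv
    rw [hd, Finsupp.finset_sum_apply, Fin.sum_univ_six]
    simp only [Finsupp.single_apply]
    rw [if_neg (fun e => c0 e.symm), if_neg (fun e => c1 e.symm),
      if_neg (fun e => c2 e.symm), if_neg (fun e => c3 e.symm),
      if_neg (fun e => c4 e.symm), if_neg (fun e => c5 e.symm)]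
    norm_num
  set i0f : Fin 6 → Fin N := ![a0, a0, a1, a1, a2, a3] with hi0f
  have hc := congrArg (coeff d) h
  rw [coeff_neck, coeff_neck] at hc
  -- uniqueness for mu1
  have uniq : ∀ i : Fin 6 → Fin N,
      (∑ m : Fin 6, Finsupp.single
        (((fun m => ![(0:Fin 2), 0, 1, 0, 1, 1] ⟨m % 6, Nat.mod_lt _ (by omega)⟩) m.val,
          i m, i ⟨(m.val + 1) % 6, Nat.mod_lt _ (by omega)⟩)) 1) = d → i = i0f := by
    intro i hei
    have hmem : ∀ m0 : Fin 6,
        d (((fun m => ![(0:Fin 2), 0, 1, 0, 1, 1] ⟨m % 6, Nat.mod_lt _ (by omega)⟩) m0.val,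
          i m0, i ⟨(m0.val + 1) % 6, Nat.mod_lt _ (by omega)⟩)) ≠ 0 := by
      intro m0
      rw [← hei]
      exact sum_single_apply_ne _ m0
    have g0 : ((0:Fin 2), i 0, i 1) = w 0 ∨ ((0:Fin 2), i 0, i 1) = w 1 ∨
        ((0:Fin 2), i 0, i 1) = w 2 ∨ ((0:Fin 2), i 0, i 1) = w 3 ∨
        ((0:Fin 2), i 0, i 1) = w 4 ∨ ((0:Fin 2), i 0, i 1) = w 5 := key _ (hmem 0)
    have g1 : ((0:Fin 2), i 1, i 2) = w 0 ∨ ((0:Fin 2), i 1, i 2) = w 1 ∨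
        ((0:Fin 2), i 1, i 2) = w 2 ∨ ((0:Fin 2), i 1, i 2) = w 3 ∨
        ((0:Fin 2), i 1, i 2) = w 4 ∨ ((0:Fin 2), i 1, i 2) = w 5 := key _ (hmem 1)
    have g2 : ((1:Fin 2), i 2, i 3) = w 0 ∨ ((1:Fin 2), i 2, i 3) = w 1 ∨
        ((1:Fin 2), i 2, i 3) = w 2 ∨ ((1:Fin 2), i 2, i 3) = w 3 ∨
        ((1:Fin 2), i 2, i 3) = w 4 ∨ ((1:Fin 2), i 2, i 3) = w 5 := key _ (hmem 2)
    have g3 : ((0:Fin 2), i 3, i 4) = w 0 ∨ ((0:Fin 2), i 3, i 4) = w 1 ∨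
        ((0:Fin 2), i 3, i 4) = w 2 ∨ ((0:Fin 2), i 3, i 4) = w 3 ∨
        ((0:Fin 2), i 3, i 4) = w 4 ∨ ((0:Fin 2), i 3, i 4) = w 5 := key _ (hmem 3)
    have g4 : ((1:Fin 2), i 4, i 5) = w 0 ∨ ((1:Fin 2), i 4, i 5) = w 1 ∨
        ((1:Fin 2), i 4, i 5) = w 2 ∨ ((1:Fin 2), i 4, i 5) = w 3 ∨
        ((1:Fin 2), i 4, i 5) = w 4 ∨ ((1:Fin 2), i 4, i 5) = w 5 := key _ (hmem 4)
    have g5 : ((1:Fin 2), i 5, i 0) = w 0 ∨ ((1:Fin 2), i 5, i 0) = w 1 ∨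
        ((1:Fin 2), i 5, i 0) = w 2 ∨ ((1:Fin 2), i 5, i 0) = w 3 ∨
        ((1:Fin 2), i 5, i 0) = w 4 ∨ ((1:Fin 2), i 5, i 0) = w 5 := key _ (hmem 5)
    have hw0 : w 0 = (0, a0, a0) := rfl
    have hw1 : w 1 = (0, a0, a1) := rfl
    have hw2 : w 2 = (1, a1, a1) := rfl
    have hw3 : w 3 = (0, a1, a2) := rfl
    have hw4 : w 4 = (1, a2, a3) := rfl
    have hw5 : w 5 = (1, a3, a0) := rfl
    simp only [hw0, hw1, hw2, hw3, hw4, hw5,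
      Prod.mk.injEq, show ((0:Fin 2) = 1) = False by simp, show ((1:Fin 2) = 0) = False by simp,
      false_and, false_or, or_false, true_and, and_true,
      Fin.ext_iff, a0, a1, a2, a3] at g0 g1 g2 g3 g4 g5
    have hv : (i 0).val = 0 ∧ (i 1).val = 0 ∧ (i 2).val = 1 ∧ (i 3).val = 1 ∧
        (i 4).val = 2 ∧ (i 5).val = 3 := by omega
    funext m
    fin_cases m
    · exact Fin.ext hv.1
    · exact Fin.ext hv.2.1
    · exact Fin.ext hv.2.2.1
    · exact Fin.ext hv.2.2.2.1
    · exact Fin.ext hv.2.2.2.2.1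
    · exact Fin.ext hv.2.2.2.2.2
  -- emptiness for mu2
  have emp : ∀ i : Fin 6 → Fin N,
      (∑ m : Fin 6, Finsupp.single
        (((fun m => ![(0:Fin 2), 0, 1, 1, 0, 1] ⟨m % 6, Nat.mod_lt _ (by omega)⟩) m.val,
          i m, i ⟨(m.val + 1) % 6, Nat.mod_lt _ (by omega)⟩)) 1) = d → False := by
    intro i hei
    have hmem : ∀ m0 : Fin 6,
        d (((fun m => ![(0:Fin 2), 0, 1, 1, 0, 1] ⟨m % 6, Nat.mod_lt _ (by omega)⟩) m0.val,
          i m0, i ⟨(m0.val + 1) % 6, Nat.mod_lt _ (by omega)⟩)) ≠ 0 := by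
      intro m0
      rw [← hei]
      exact sum_single_apply_ne _ m0
    have g0 : ((0:Fin 2), i 0, i 1) = w 0 ∨ ((0:Fin 2), i 0, i 1) = w 1 ∨
        ((0:Fin 2), i 0, i 1) = w 2 ∨ ((0:Fin 2), i 0, i 1) = w 3 ∨
        ((0:Fin 2), i 0, i 1) = w 4 ∨ ((0:Fin 2), i 0, i 1) = w 5 := key _ (hmem 0)
    have g1 : ((0:Fin 2), i 1, i 2) = w 0 ∨ ((0:Fin 2), i 1, i 2) = w 1 ∨
        ((0:Fin 2), i 1, i 2) = w 2 ∨ ((0:Fin 2), i 1, i 2) = w 3 ∨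
        ((0:Fin 2), i 1, i 2) = w 4 ∨ ((0:Fin 2), i 1, i 2) = w 5 := key _ (hmem 1)
    have g2 : ((1:Fin 2), i 2, i 3) = w 0 ∨ ((1:Fin 2), i 2, i 3) = w 1 ∨
        ((1:Fin 2), i 2, i 3) = w 2 ∨ ((1:Fin 2), i 2, i 3) = w 3 ∨
        ((1:Fin 2), i 2, i 3) = w 4 ∨ ((1:Fin 2), i 2, i 3) = w 5 := key _ (hmem 2)
    have g3 : ((1:Fin 2), i 3, i 4) = w 0 ∨ ((1:Fin 2), i 3, i 4) = w 1 ∨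
        ((1:Fin 2), i 3, i 4) = w 2 ∨ ((1:Fin 2), i 3, i 4) = w 3 ∨
        ((1:Fin 2), i 3, i 4) = w 4 ∨ ((1:Fin 2), i 3, i 4) = w 5 := key _ (hmem 3)
    have g4 : ((0:Fin 2), i 4, i 5) = w 0 ∨ ((0:Fin 2), i 4, i 5) = w 1 ∨
        ((0:Fin 2), i 4, i 5) = w 2 ∨ ((0:Fin 2), i 4, i 5) = w 3 ∨
        ((0:Fin 2), i 4, i 5) = w 4 ∨ ((0:Fin 2), i 4, i 5) = w 5 := key _ (hmem 4)
    have g5 : ((1:Fin 2), i 5, i 0) = w 0 ∨ ((1:Fin 2), i 5, i 0) = w 1 ∨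
        ((1:Fin 2), i 5, i 0) = w 2 ∨ ((1:Fin 2), i 5, i 0) = w 3 ∨
        ((1:Fin 2), i 5, i 0) = w 4 ∨ ((1:Fin 2), i 5, i 0) = w 5 := key _ (hmem 5)
    have hw0 : w 0 = (0, a0, a0) := rfl
    have hw1 : w 1 = (0, a0, a1) := rfl
    have hw2 : w 2 = (1, a1, a1) := rfl
    have hw3 : w 3 = (0, a1, a2) := rfl
    have hw4 : w 4 = (1, a2, a3) := rfl
    have hw5 : w 5 = (1, a3, a0) := rfl
    simp only [hw0, hw1, hw2, hw3, hw4, hw5,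
      Prod.mk.injEq, show ((0:Fin 2) = 1) = False by simp, show ((1:Fin 2) = 0) = False by simp,
      false_and, false_or, or_false, true_and, and_true,
      Fin.ext_iff, a0, a1, a2, a3] at g0 g1 g2 g3 g4 g5
    omega
  -- the term at i0f has exponent d
  have hpos : (∑ m : Fin 6, Finsupp.single
      (((fun m => ![(0:Fin 2), 0, 1, 0, 1, 1] ⟨m % 6, Nat.mod_lt _ (by omega)⟩) m.val,
        i0f m, i0f ⟨(m.val + 1) % 6, Nat.mod_lt _ (by omega)⟩)) 1) = d := by
    rw [hd]
    refine Finset.sum_congr rfl fun m _ => ?_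
    fin_cases m <;> rfl
  have hL : (∑ i : Fin 6 → Fin N, if (∑ m : Fin 6, Finsupp.single
        (((fun m => ![(0:Fin 2), 0, 1, 0, 1, 1] ⟨m % 6, Nat.mod_lt _ (by omega)⟩) m.val,
          i m, i ⟨(m.val + 1) % 6, Nat.mod_lt _ (by omega)⟩)) 1) = d
      then (1:F) else 0) = 1 := by
    rw [Finset.sum_eq_single i0f]
    · rw [if_pos hpos]
    · intro b _ hb
      exact if_neg fun he => hb (uniq b he)
    · intro hb
      exact absurd (Finset.mem_univ _) hb
  have hR : (∑ i : Fin 6 → Fin N, if (∑ m : Fin 6, Finsupp.single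
        (((fun m => ![(0:Fin 2), 0, 1, 1, 0, 1] ⟨m % 6, Nat.mod_lt _ (by omega)⟩) m.val,
          i m, i ⟨(m.val + 1) % 6, Nat.mod_lt _ (by omega)⟩)) 1) = d
      then (1:F) else 0) = 0 :=
    Finset.sum_eq_zero fun i _ => if_neg fun he => emp i he
  rw [hL, hR] at hc
  exact one_ne_zero hc
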